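/- arXiv:2506.14007 — 4 statements merged into one kernel-verified Lean document; each statement's English description precedes it below -/
import Mathlib

section
/- Let K be a simplicial set and n ≥ 0. Then every equivalence class in S(K)_n has exactly one representative (σ, f) such that σ is a nondegenerate simplex of K and f is surjective. -/
open CategoryTheory Opposite Simplicial

universe u

/-- A pair `(σ, f)` representing an element of the symmetrization `S(K)_n`:
`σ` is an `m`-simplex of `K` for some object `⟨m⟩` of the simplex category and
`f : ⟨n⟩ → ⟨m⟩` is an arbitrary function. -/
structure SymPair (K : SSet.{u}) (n : ℕ) : Type u where
  d : SimplexCategory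
  σ : K.obj (op d)
  f : Fin (n + 1) → Fin (d.len + 1)

/-- The generating relation `(σ, g ∘ f) ∼ (g^*(σ), f)` for weakly increasing `g`. -/
inductive SymRel (K : SSet.{u}) (n : ℕ) : SymPair K n → SymPair K n → Prop where
  | mk {d e : SimplexCategory} (g : d ⟶ e) (σ : K.obj (op e))
      (f : Fin (n + 1) → Fin (d.len + 1)) :
      SymRel K n ⟨e, σ, g.toOrderHom ∘ f⟩ ⟨d, K.map g.op σ, f⟩

/-- `S(K)_n`, the set of `n`-simplices of the symmetrization of `K`: the quotient of
the set of pairs `(σ, f)` by the equivalence relation generated by `SymRel`. -/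
def SymK (K : SSet.{u}) (n : ℕ) : Type u := Quot (SymRel K n)

/-- A simplex `σ ∈ K_m` is nondegenerate if it is not of the form `s^*(τ)` for a
surjective weakly increasing `s : ⟨m⟩ → ⟨l⟩` with `l < m`. -/
def IsNondegenerateSimplex (K : SSet.{u}) {d : SimplexCategory}
    (σ : K.obj (op d)) : Prop :=
  ∀ e : SimplexCategory, e.len < d.len → ∀ s : d ⟶ e,
    Function.Surjective s.toOrderHom → ∀ τ : K.obj (op e), σ ≠ K.map s.op τ

/-!
Write `f = i ∘ f₁` with `i` injective and monotone (the inclusion of the image of `f`) and `f₁`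
surjective, then `i^*σ = s^*τ` with `s` surjective and `τ` nondegenerate (Eilenberg–Zilber).
The pair `(τ, s ∘ f₁)` is equivalent to `(σ, f)`, as both are one move away from `(i^*σ, f₁)`,
and it is determined by `(σ, f)` because both factorizations are unique. It does not change
under a generating move `(σ, g ∘ f) ∼ (g^*σ, f)`: if `f = j ∘ f₂`, the image factorization of
`g ∘ f` is obtained from that of `g ∘ j`, and Eilenberg–Zilber decompositions are stable under
precomposition with surjections. So each class has a single such normal form, and a pair of the required shape is its
own normal form.
-/

open CategoryTheory Limits

namespace SimplexCategory

lemma exists_mono_comp_surjective_eq {n : ℕ} {a : SimplexCategory}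
    (f : Fin (n + 1) → Fin (a.len + 1)) :
    ∃ (c : SimplexCategory) (i : c ⟶ a) (f₁ : Fin (n + 1) → Fin (c.len + 1)),
      Mono i ∧ Function.Surjective f₁ ∧ f = i.toOrderHom ∘ f₁ := by
  set S := Finset.univ.image f
  have hS : S.card = S.card - 1 + 1 :=
    (Nat.succ_pred_eq_of_pos (Finset.card_pos.mpr (Finset.univ_nonempty.image f))).symm
  have hmem (x : Fin (n + 1)) : f x ∈ S := Finset.mem_image_of_mem f (Finset.mem_univ x)
  let e := S.orderIsoOfFin hS
  refine ⟨⦋S.card - 1⦌, Hom.mk (S.orderEmbOfFin hS).toOrderHom,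
    fun x ↦ e.symm ⟨f x, hmem x⟩, ?_, ?_, ?_⟩
  · exact mono_iff_injective.mpr (S.orderEmbOfFin hS).injective
  · intro y
    obtain ⟨x, -, hx⟩ := Finset.mem_image.mp (e y).2
    exact ⟨x, by simp [hx]⟩
  · funext x
    simp [← Finset.coe_orderIsoOfFin_apply, e]

variable {n : ℕ} {a c c' : SimplexCategory} {i : c ⟶ a} {i' : c' ⟶ a}
  {f₁ : Fin (n + 1) → Fin (c.len + 1)} {f₁' : Fin (n + 1) → Fin (c'.len + 1)}

lemma range_eq_of_comp_surjective_eq (hf₁ : Function.Surjective f₁)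
    (hf₁' : Function.Surjective f₁') (h : i.toOrderHom ∘ f₁ = i'.toOrderHom ∘ f₁') :
    Set.range i.toOrderHom = Set.range i'.toOrderHom := by
  rw [← hf₁.range_comp, h, hf₁'.range_comp]

lemma eq_of_mono_comp_surjective_eq [Mono i] [Mono i'] (hf₁ : Function.Surjective f₁)
    (hf₁' : Function.Surjective f₁') (h : i.toOrderHom ∘ f₁ = i'.toOrderHom ∘ f₁') :
    c = c' := by
  have hcard := congrArg (fun s : Set (Fin (a.len + 1)) ↦ Nat.card s)
    (range_eq_of_comp_surjective_eq hf₁ hf₁' h)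
  simp only [Nat.card_range_of_injective (mono_iff_injective.mp ‹Mono i›),
    Nat.card_range_of_injective (mono_iff_injective.mp ‹Mono i'›), Nat.card_eq_fintype_card,
    Fintype.card_fin, Nat.add_right_cancel_iff] at hcard
  exact SimplexCategory.ext hcard

lemma mono_comp_surjective_unique {i' : c ⟶ a} {f₁' : Fin (n + 1) → Fin (c.len + 1)}
    [Mono i] [Mono i'] (hf₁ : Function.Surjective f₁) (hf₁' : Function.Surjective f₁')
    (h : i.toOrderHom ∘ f₁ = i'.toOrderHom ∘ f₁') : i = i' ∧ f₁ = f₁' := by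
  have hi : StrictMono i.toOrderHom :=
    i.toOrderHom.monotone.strictMono_of_injective (mono_iff_injective.mp ‹_›)
  have hi' : StrictMono i'.toOrderHom :=
    i'.toOrderHom.monotone.strictMono_of_injective (mono_iff_injective.mp ‹_›)
  have hii' : i = i' := Hom.ext' _ _ (OrderHom.ext _ _
    ((hi.range_inj hi').mp (range_eq_of_comp_surjective_eq hf₁ hf₁' h)))
  subst hii'
  exact ⟨rfl, funext fun x ↦ hi.injective (congrFun h x)⟩

end SimplexCategory

lemma isNondegenerateSimplex_iff_mem_nonDegenerate {K : SSet.{u}} {d : SimplexCategory}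
    (σ : K.obj (op d)) :
    IsNondegenerateSimplex K σ ↔ σ ∈ K.nonDegenerate d.len := by
  rw [SSet.mem_nonDegenerate_iff_notMem_degenerate, SSet.mem_degenerate_iff]
  constructor
  · rintro h ⟨m, hm, s, hs, τ, rfl⟩
    exact h ⦋m⦌ hm s (SimplexCategory.epi_iff_surjective.mp hs) τ rfl
  · rintro h e he s hs τ rfl
    exact h ⟨e.len, he, s, SimplexCategory.epi_iff_surjective.mpr hs, τ, rfl⟩

namespace SymPair

variable {K : SSet.{u}} {n : ℕ}

lemma mk_eq_mk_of_map_eq {a b b' : SimplexCategory} (f₁ : Fin (n + 1) → Fin (a.len + 1))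
    (s : a ⟶ b) (s' : a ⟶ b') [Epi s] [Epi s'] {τ : K.obj (op b)} {τ' : K.obj (op b')}
    (hτ : τ ∈ K.nonDegenerate b.len) (hτ' : τ' ∈ K.nonDegenerate b'.len)
    (h : K.map s.op τ = K.map s'.op τ') :
    (⟨b, τ, s.toOrderHom ∘ f₁⟩ : SymPair K n) = ⟨b', τ', s'.toOrderHom ∘ f₁⟩ := by
  obtain rfl : b = b' := SimplexCategory.ext
    (K.unique_nonDegenerate_dim (n := a.len) _ s ⟨τ, hτ⟩ rfl s' ⟨τ', hτ'⟩ h)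
  obtain rfl : τ = τ' := congrArg Subtype.val
    (K.unique_nonDegenerate_simplex (n := a.len) _ s ⟨τ, hτ⟩ rfl s' ⟨τ', hτ'⟩ h)
  obtain rfl : s = s' := K.unique_nonDegenerate_map (n := a.len) _ s ⟨τ, hτ⟩ rfl s' ⟨τ, hτ'⟩ h
  rfl

def IsNormalForm (p q : SymPair K n) : Prop :=
  q.σ ∈ K.nonDegenerate q.d.len ∧
    ∃ (c : SimplexCategory) (i : c ⟶ p.d) (s : c ⟶ q.d) (f₁ : Fin (n + 1) → Fin (c.len + 1)),
      Mono i ∧ Epi s ∧ Function.Surjective f₁ ∧ K.map i.op p.σ = K.map s.op q.σ ∧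
        p.f = i.toOrderHom ∘ f₁ ∧ q.f = s.toOrderHom ∘ f₁

lemma exists_isNormalForm (p : SymPair K n) : ∃ q, IsNormalForm p q := by
  obtain ⟨c, i, f₁, hi, hf₁, hpf⟩ := SimplexCategory.exists_mono_comp_surjective_eq p.f
  obtain ⟨m, s, hs, τ, hτ⟩ := K.exists_nonDegenerate (n := c.len) (K.map i.op p.σ)
  exact ⟨⟨⦋m⦌, τ, s.toOrderHom ∘ f₁⟩, τ.2, c, i, s, f₁, hi, hs, hf₁, hτ, hpf, rfl⟩

lemma IsNormalForm.unique {p q q' : SymPair K n} (h : IsNormalForm p q)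
    (h' : IsNormalForm p q') : q = q' := by
  obtain ⟨hτ, c, i, s, f₁, hi, hs, hf₁, heq, hpf, hqf⟩ := h
  obtain ⟨hτ', c', i', s', f₁', hi', hs', hf₁', heq', hpf', hqf'⟩ := h'
  obtain rfl := SimplexCategory.eq_of_mono_comp_surjective_eq hf₁ hf₁' (hpf.symm.trans hpf')
  obtain ⟨rfl, rfl⟩ :=
    SimplexCategory.mono_comp_surjective_unique hf₁ hf₁' (hpf.symm.trans hpf')
  change (⟨q.d, q.σ, q.f⟩ : SymPair K n) = ⟨q'.d, q'.σ, q'.f⟩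
  rw [hqf, hqf']
  exact mk_eq_mk_of_map_eq f₁ s s' hτ hτ' (heq.symm.trans heq')

lemma isNormalForm_self {q : SymPair K n} (hσ : q.σ ∈ K.nonDegenerate q.d.len)
    (hf : Function.Surjective q.f) : IsNormalForm q q :=
  ⟨hσ, q.d, 𝟙 _, 𝟙 _, q.f, inferInstance, inferInstance, hf, rfl, rfl, rfl⟩

lemma IsNormalForm.quot_mk_eq {p q : SymPair K n} (h : IsNormalForm p q) :
    Quot.mk (SymRel K n) p = Quot.mk (SymRel K n) q := by
  obtain ⟨-, c, i, s, f₁, -, -, -, heq, hpf, hqf⟩ := h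
  change Quot.mk _ (⟨p.d, p.σ, p.f⟩ : SymPair K n) =
    Quot.mk _ (⟨q.d, q.σ, q.f⟩ : SymPair K n)
  rw [hpf, hqf, Quot.sound (SymRel.mk i p.σ f₁), Quot.sound (SymRel.mk s q.σ f₁), heq]

lemma IsNormalForm.of_symRel {p p' q : SymPair K n} (hrel : SymRel K n p p')
    (h : IsNormalForm p' q) : IsNormalForm p q := by
  cases hrel with
  | mk g σ f =>
  obtain ⟨hτ, c, i, s, f₁, _, _, hf₁, heq, hpf, hqf⟩ := h
  obtain ⟨m, u, _, τ₀, hτ₀⟩ :=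
    K.exists_nonDegenerate (n := (image (i ≫ g)).len) (K.map (image.ι (i ≫ g)).op σ)
  have hs : K.map s.op q.σ = K.map (factorThruImage (i ≫ g) ≫ u).op τ₀ := by
    calc K.map s.op q.σ = K.map (i ≫ g).op σ := by rw [← heq, op_comp, K.map_comp_apply]
      _ = K.map (factorThruImage (i ≫ g)).op (K.map (image.ι (i ≫ g)).op σ) := by
        rw [← K.map_comp_apply, ← op_comp, image.fac]
      _ = _ := by rw [hτ₀, ← K.map_comp_apply, ← op_comp]
  obtain rfl : q = ⟨⦋m⦌, τ₀, (factorThruImage (i ≫ g) ≫ u).toOrderHom ∘ f₁⟩ := by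
    change (⟨q.d, q.σ, q.f⟩ : SymPair K n) = _
    rw [hqf]
    exact mk_eq_mk_of_map_eq f₁ s _ hτ τ₀.2 hs
  refine ⟨τ₀.2, image (i ≫ g), image.ι (i ≫ g), u, (factorThruImage (i ≫ g)).toOrderHom ∘ f₁,
    inferInstance, inferInstance, ?_, hτ₀, ?_, rfl⟩
  · exact (SimplexCategory.epi_iff_surjective.mp inferInstance).comp hf₁
  · dsimp only at hpf ⊢
    rw [hpf]
    funext x
    exact (SimplexCategory.congr_toOrderHom_apply (image.fac (i ≫ g)) (f₁ x)).symm

lemma IsNormalForm.of_symRel_symm {p p' q : SymPair K n} (hrel : SymRel K n p p')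
    (h : IsNormalForm p q) : IsNormalForm p' q := by
  obtain ⟨q', hq'⟩ := exists_isNormalForm p'
  rwa [h.unique (hq'.of_symRel hrel)]

lemma isNormalForm_congr_of_eqvGen {p p' : SymPair K n} (h : Relation.EqvGen (SymRel K n) p p')
    (q : SymPair K n) : IsNormalForm p q ↔ IsNormalForm p' q := by
  induction h with
  | rel _ _ hrel => exact ⟨(·.of_symRel_symm hrel), (·.of_symRel hrel)⟩
  | refl => rfl
  | symm _ _ _ ih => exact ih.symm
  | trans _ _ _ _ _ ih₁ ih₂ => exact ih₁.trans ih₂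

lemma IsNormalForm.surjective {p q : SymPair K n} (h : IsNormalForm p q) :
    Function.Surjective q.f := by
  obtain ⟨-, c, i, s, f₁, -, hs, hf₁, -, -, hqf⟩ := h
  rw [hqf]
  exact (SimplexCategory.epi_iff_surjective.mp hs).comp hf₁

end SymPair

/-- every equivalence class in `S(K)_n` has exactly one representative
`(σ, f)` with `σ` a nondegenerate simplex of `K` and `f` surjective. -/
theorem stmt2 (K : SSet.{u}) (n : ℕ) (x : SymK K n) :
    ∃! q : SymPair K n, (IsNondegenerateSimplex K q.σ ∧ Function.Surjective q.f) ∧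
      Quot.mk (SymRel K n) q = x := by
  obtain ⟨p, rfl⟩ := Quot.exists_rep x
  obtain ⟨q, hq⟩ := SymPair.exists_isNormalForm p
  refine ⟨q, ⟨⟨(isNondegenerateSimplex_iff_mem_nonDegenerate _).mpr hq.1, hq.surjective⟩,
    hq.quot_mk_eq.symm⟩, ?_⟩
  rintro q' ⟨⟨hσ', hf'⟩, hq'⟩
  rw [isNondegenerateSimplex_iff_mem_nonDegenerate] at hσ'
  have hpq' : SymPair.IsNormalForm p q' :=
    (SymPair.isNormalForm_congr_of_eqvGen (Quot.eqvGen_exact hq') q').mp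
      (SymPair.isNormalForm_self hσ' hf')
  exact hpq'.unique hq
end

section
/- Let n, l ≥ 0 and let f : ⟨n⟩ → ⟨l⟩ be an arbitrary function. Define the simplicial set C^f by letting C^f_m be the set of functions g : ⟨m⟩ → ⟨n⟩ such that f∘g is weakly increasing, with a weakly increasing u : ⟨p⟩ → ⟨m⟩ acting by g ↦ g∘u. Then the geometric realization |C^f| is a contractible topological space. -/
/-!
If `a` minimises `f`, then prepending `a` to a simplex `g` of `C^f` gives again a simplex of `C^f`:
`C^f` is a cone with apex the vertex `a`. Geometrically, sliding each point of the realized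
simplex `g` along a straight line to the apex, inside the realized cone on `g`, commutes with all
simplicial operators and so glues to a contraction of `|C^f|`.
-/

open CategoryTheory Simplicial

/-- The simplicial set `C^f` associated to an arbitrary function
`f : ⟨n⟩ → ⟨l⟩`: its `m`-simplices are the arbitrary functions
`g : ⟨m⟩ → ⟨n⟩` such that `f ∘ g` is weakly increasing, with
weakly increasing maps acting by precomposition. -/
def Cf (n l : ℕ) (f : Fin (n + 1) → Fin (l + 1)) : SSet where
  obj X := { g : Fin (X.unop.len + 1) → Fin (n + 1) // Monotone (f ∘ g) }
  map u := TypeCat.ofHom fun g => ⟨g.1 ∘ u.unop.toOrderHom, g.2.comp u.unop.toOrderHom.monotone⟩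

open Opposite

universe u

namespace stdSimplex

variable {ι κ : Type*} [Fintype ι] [Fintype κ]

noncomputable def lineMap (s s' : stdSimplex ℝ ι) (t : unitInterval) : stdSimplex ℝ ι :=
  ⟨AffineMap.lineMap s.1 s'.1 (t : ℝ),
    (convex_stdSimplex ℝ ι).lineMap_mem s.2 s'.2 ⟨t.2.1, t.2.2⟩⟩

lemma _root_.Continuous.stdSimplex_lineMap {α : Type*} [TopologicalSpace α]
    {s s' : α → stdSimplex ℝ ι} {t : α → unitInterval} (hs : Continuous s)
    (hs' : Continuous s') (ht : Continuous t) :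
    Continuous fun a => lineMap (s a) (s' a) (t a) := by
  unfold lineMap
  fun_prop

@[simp]
lemma lineMap_zero (s s' : stdSimplex ℝ ι) : lineMap s s' 0 = s := by
  ext1
  simp [lineMap]

@[simp]
lemma lineMap_one (s s' : stdSimplex ℝ ι) : lineMap s s' 1 = s' := by
  ext1
  simp [lineMap]

lemma map_lineMap (g : ι → κ) (s s' : stdSimplex ℝ ι) (t : unitInterval) :
    map g (lineMap s s' t) = lineMap (map g s) (map g s') t := by
  ext1
  exact (FunOnFinite.linearMap ℝ ℝ g).toAffineMap.apply_lineMap s.1 s'.1 t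

noncomputable def cone (m : ℕ) :
    C(stdSimplex ℝ (Fin (m + 1)) × unitInterval, stdSimplex ℝ (Fin (m + 2))) where
  toFun p := lineMap (map Fin.succ p.1) (vertex 0) p.2
  continuous_toFun :=
    ((continuous_map _).comp continuous_fst).stdSimplex_lineMap continuous_const continuous_snd

lemma cone_zero {m : ℕ} (s : stdSimplex ℝ (Fin (m + 1))) : cone m (s, 0) = map Fin.succ s :=
  lineMap_zero _ _

lemma cone_one {m : ℕ} (s : stdSimplex ℝ (Fin (m + 1))) : cone m (s, 1) = vertex 0 :=
  lineMap_one _ _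

lemma map_cone {p m : ℕ} (g : Fin (p + 1) → Fin (m + 1)) (s : stdSimplex ℝ (Fin (p + 1)))
    (t : unitInterval) :
    map (Fin.cons 0 (Fin.succ ∘ g) : Fin (p + 2) → Fin (m + 2)) (cone p (s, t)) =
      cone m (map g s, t) := by
  simp only [cone, ContinuousMap.coe_mk, map_lineMap, map_comp_apply, map_vertex]
  rfl

end stdSimplex

namespace SimplexCategory

/-- The join `⦋0⦌ ⋆ u`. -/
def coneHom {p m : ℕ} (u : ⦋p⦌ ⟶ ⦋m⦌) : ⦋p + 1⦌ ⟶ ⦋m + 1⦌ :=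
  Hom.mk ⟨Fin.cons 0 (Fin.succ ∘ u.toOrderHom),
    (Fin.strictMono_succ.monotone.comp u.toOrderHom.monotone).vecCons (Fin.zero_le _)⟩

end SimplexCategory

namespace SSet

variable {X : SSet.{u}}

noncomputable def realizeSimplex {m : ℕ} (x : X _⦋m⦌) :
    C(_root_.stdSimplex ℝ (Fin (m + 1)), |X|) :=
  TopCat.toSSetObjEquiv _ _ ((sSetTopAdj.unit.app X).app _ x)

lemma realizeSimplex_map {p m : ℕ} (u : ⦋p⦌ ⟶ ⦋m⦌) (x : X _⦋m⦌)
    (s : _root_.stdSimplex ℝ (Fin (p + 1))) :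
    realizeSimplex (X.map u.op x) s = realizeSimplex x (_root_.stdSimplex.map u s) := by
  have h := ConcreteCategory.congr_hom ((sSetTopAdj.unit.app X).naturality u.op) x
  exact congrArg (fun y => TopCat.toSSetObjEquiv _ _ y s) h

lemma homEquiv_symm_realizeSimplex {E : TopCat.{u}} (φ : X ⟶ TopCat.toSSet.obj E) {m : ℕ}
    (x : X _⦋m⦌) (s : _root_.stdSimplex ℝ (Fin (m + 1))) :
    (sSetTopAdj.homEquiv X E).symm φ (realizeSimplex x s) =
      E.toSSetObjEquiv _ (φ.app _ x) s := by
  conv_rhs => rw [← (sSetTopAdj.homEquiv X E).apply_symm_apply φ, Adjunction.homEquiv_unit]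
  rfl

lemma toTop_hom_ext {E : TopCat.{u}} {F G : |X| ⟶ E}
    (h : ∀ (m : ℕ) (x : X _⦋m⦌) (s : _root_.stdSimplex ℝ (Fin (m + 1))),
      F (realizeSimplex x s) = G (realizeSimplex x s)) : F = G := by
  apply (sSetTopAdj.homEquiv X E).injective
  ext m x
  apply (E.toSSetObjEquiv m).injective
  ext s
  simp only [Adjunction.homEquiv_unit]
  exact h m.unop.len x s

/-- A cone structure on `X` with apex `apex`: `cone x` is the cone on `x`, with the apex as its
new vertex `0`. This is an extra degeneracy of `X` augmented over the point, with the
compatibility asked for all simplicial operators rather than the generating ones. -/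
structure ConeStructure (X : SSet.{u}) where
  apex : X _⦋0⦌
  cone {m : ℕ} : X _⦋m⦌ → X _⦋m + 1⦌
  map_coneHom_cone {p m : ℕ} (u : ⦋p⦌ ⟶ ⦋m⦌) (x : X _⦋m⦌) :
    X.map (SimplexCategory.coneHom u).op (cone x) = cone (X.map u.op x)
  δ_zero_cone {m : ℕ} (x : X _⦋m⦌) : X.δ 0 (cone x) = x
  vertex_zero_cone {m : ℕ} (x : X _⦋m⦌) :
    X.map (SimplexCategory.const ⦋0⦌ ⦋m + 1⦌ 0).op (cone x) = apex

namespace ConeStructure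

variable (c : X.ConeStructure)

noncomputable def contractionOnSimplex {m : ℕ} (x : X _⦋m⦌) :
    C(_root_.stdSimplex ℝ (Fin (m + 1)), C(unitInterval, |X|)) :=
  ((realizeSimplex (c.cone x)).comp (stdSimplex.cone m)).curry

lemma contractionOnSimplex_map {p m : ℕ} (u : ⦋p⦌ ⟶ ⦋m⦌) (x : X _⦋m⦌) :
    c.contractionOnSimplex (X.map u.op x) =
      (c.contractionOnSimplex x).comp ⟨stdSimplex.map u, stdSimplex.continuous_map _⟩ := by
  ext s t
  simp only [contractionOnSimplex, ContinuousMap.curry_apply, ContinuousMap.comp_apply,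
    ContinuousMap.coe_mk, ← c.map_coneHom_cone, realizeSimplex_map]
  exact congrArg _ (stdSimplex.map_cone _ s t)

noncomputable def toSingular : X ⟶ TopCat.toSSet.obj (TopCat.of C(unitInterval, |X|)) where
  app m := TypeCat.ofHom fun x =>
    (TopCat.toSSetObjEquiv _ _).symm (c.contractionOnSimplex (m := m.unop.len) x)
  naturality m m' u := by
    ext x
    exact congrArg ((TopCat.of C(unitInterval, |X|)).toSSetObjEquiv m').symm
      (c.contractionOnSimplex_map u.unop x)

/-- The homotopy is built through the adjunction `|-| ⊣ Sing` with target the path space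
`C(I, |X|)`, which avoids identifying `|X × Δ[1]|` with `|X| × I`. -/
noncomputable def contraction : |X| ⟶ TopCat.of C(unitInterval, |X|) :=
  (sSetTopAdj.homEquiv _ _).symm c.toSingular

lemma contraction_realizeSimplex {m : ℕ} (x : X _⦋m⦌)
    (s : _root_.stdSimplex ℝ (Fin (m + 1))) (t : unitInterval) :
    c.contraction (realizeSimplex x s) t =
      realizeSimplex (c.cone x) (stdSimplex.cone m (s, t)) := by
  rw [contraction, homEquiv_symm_realizeSimplex]
  rfl

lemma contraction_zero (p : |X|) : c.contraction p 0 = p := by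
  suffices h : c.contraction ≫ TopCat.ofHom ⟨(· 0), continuous_eval_const 0⟩ = 𝟙 |X| from
    ConcreteCategory.congr_hom h p
  refine toTop_hom_ext fun m x s => ?_
  show c.contraction (realizeSimplex x s) 0 = realizeSimplex x s
  rw [contraction_realizeSimplex, stdSimplex.cone_zero, ← Fin.succAbove_zero]
  exact (realizeSimplex_map (SimplexCategory.δ 0) (c.cone x) s).symm.trans
    (congrArg (realizeSimplex · s) (c.δ_zero_cone x))

lemma contraction_one (p : |X|) : c.contraction p 1 = realizeSimplex c.apex default := by
  suffices h : c.contraction ≫ TopCat.ofHom ⟨(· 1), continuous_eval_const 1⟩ =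
      TopCat.const (realizeSimplex c.apex default) from
    ConcreteCategory.congr_hom h p
  refine toTop_hom_ext fun m x s => ?_
  show c.contraction (realizeSimplex x s) 1 = realizeSimplex c.apex default
  rw [contraction_realizeSimplex, stdSimplex.cone_one, ← c.vertex_zero_cone x, realizeSimplex_map,
    Subsingleton.elim default (stdSimplex.vertex 0), stdSimplex.map_vertex]
  rfl

noncomputable def homotopy :
    ContinuousMap.Homotopy (ContinuousMap.id |X|)
      (ContinuousMap.const |X| (realizeSimplex c.apex default)) where
  toContinuousMap := c.contraction.hom.uncurry.comp ContinuousMap.prodSwap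
  map_zero_left := c.contraction_zero
  map_one_left := c.contraction_one

end ConeStructure

theorem ConeStructure.contractibleSpace (c : X.ConeStructure) : ContractibleSpace |X| :=
  (contractible_iff_id_nullhomotopic _).2 ⟨_, ⟨c.homotopy⟩⟩

end SSet

def Cf.coneStructure {n l : ℕ} {f : Fin (n + 1) → Fin (l + 1)} {a : Fin (n + 1)}
    (ha : ∀ x, f a ≤ f x) : (Cf n l f).ConeStructure where
  apex := ⟨fun _ => a, fun _ _ _ => le_rfl⟩
  cone g := ⟨Fin.cons a g.1, by
    rw [Fin.comp_cons]
    exact g.2.vecCons (ha _)⟩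
  map_coneHom_cone u g := Subtype.ext <| funext fun i => Fin.cases rfl (fun _ => rfl) i
  δ_zero_cone g := Subtype.ext <| funext fun i => by
    show (Fin.cons a g.1 : Fin (_ + 2) → Fin (n + 1)) (Fin.succAbove 0 i) = g.1 i
    rw [Fin.succAbove_zero, Fin.cons_succ]
  vertex_zero_cone _ := rfl

/-- the geometric realization of `C^f` is contractible. -/
theorem stmt3 (n l : ℕ) (f : Fin (n + 1) → Fin (l + 1)) :
    ContractibleSpace (SSet.toTop.obj (Cf n l f)) := by
  obtain ⟨a, ha⟩ := Finite.exists_min f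
  exact (Cf.coneStructure ha).contractibleSpace
end

section
/- Let K be a simplicial set, σ ∈ K_m a nondegenerate simplex, and f : ⟨n⟩ → ⟨m⟩ a surjective function. If g : ⟨p⟩ → ⟨n⟩ is a surjective function and there exists τ ∈ K_p with (τ, id_{⟨p⟩}) ∼ (σ, f∘g) in S(K)_p, then f∘g is weakly increasing and τ = (f∘g)^*(σ). (Equivalently: the simplicial set H from the proof of the coinitiality proposition is covered by the simplicial subsets H_{(1,A)} of simplices with image contained in a proper subset A ⊊ ⟨n⟩ together with the simplicial subset H_{(0,⟨n⟩)} of simplices g with f∘g weakly increasing.) -/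
/-!
Every pair `(ρ, φ)` has a normal form `(σ₀, h)` with `σ₀` nondegenerate and `h` surjective:
factor `φ = μ ∘ f₁` through its image, take the Eilenberg–Zilber decomposition
`μ^*(ρ) = t^*(σ₀)` and put `h = t ∘ f₁`. Uniqueness in the Eilenberg–Zilber lemma makes the
normal form invariant under `(ρ, g ∘ φ) ∼ (g^*(ρ), φ)`, so it is an invariant of `S(K)_p`.
The pair `(σ, f ∘ g)` is its own normal form, hence also that of `(τ, id)`. There
`μ ∘ f₁ = id` forces `f₁` to be monotone, so `f ∘ g = t ∘ f₁` is monotone and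
`τ = f₁^*(μ^*(τ)) = f₁^*(t^*(σ)) = (f ∘ g)^*(σ)`.
-/

open CategoryTheory Opposite Simplicial

universe u

open Function

lemma Monotone.monotone_of_leftInverse {α β : Type*} [PartialOrder α] [LinearOrder β]
    {μ : β → α} {s : α → β} (hμ : Monotone μ) (hs : LeftInverse μ s) : Monotone s := by
  intro x y hxy
  by_contra! hlt
  have hyx : y ≤ x := by simpa only [hs x, hs y] using hμ hlt.le
  exact hlt.ne (by rw [le_antisymm hxy hyx])

namespace SimplexCategory

lemma exists_comp_eq_of_range_subset {a b c : SimplexCategory} (ψ : a ⟶ c) (μ : b ⟶ c)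
    [Mono μ] (h : Set.range ψ.toOrderHom ⊆ Set.range μ.toOrderHom) :
    ∃ w : a ⟶ b, w ≫ μ = ψ := by
  obtain ⟨w, hw⟩ := Set.range_subset_range_iff_exists_comp.1 h
  have hμ : StrictMono μ.toOrderHom :=
    μ.toOrderHom.monotone.strictMono_of_injective (mono_iff_injective.1 inferInstance)
  refine ⟨Hom.mk ⟨w, fun x y hxy => hμ.le_iff_le.1 ?_⟩, ?_⟩
  · simpa only [hw, comp_apply] using ψ.toOrderHom.monotone hxy
  · ext x : 3
    exact (congrFun hw x).symm

lemma exists_mono_comp_surjective {p d : ℕ} (φ : Fin (p + 1) → Fin (d + 1)) :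
    ∃ (k : ℕ) (ι : ⦋k⦌ ⟶ ⦋d⦌) (φ' : Fin (p + 1) → Fin (k + 1)),
      Mono ι ∧ Surjective φ' ∧ ι.toOrderHom ∘ φ' = φ := by
  classical
  set s := Finset.univ.image φ
  have hs : s.card = s.card - 1 + 1 :=
    (Nat.succ_pred_eq_of_pos (Finset.univ_nonempty.image φ).card_pos).symm
  let ι : ⦋s.card - 1⦌ ⟶ ⦋d⦌ := Hom.mk (s.orderEmbOfFin hs).toOrderHom
  have hι : Set.range ι.toOrderHom = s := Finset.range_orderEmbOfFin s hs
  obtain ⟨φ', hφ'⟩ : ∃ φ', φ = ι.toOrderHom ∘ φ' := Set.range_subset_range_iff_exists_comp.1 <| by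
    rintro _ ⟨x, rfl⟩
    simp [hι, s]
  have hinj : Function.Injective ι.toOrderHom := (s.orderEmbOfFin hs).injective
  refine ⟨_, ι, φ', mono_iff_injective.2 hinj, fun y => ?_, hφ'.symm⟩
  have hy : ι.toOrderHom y ∈ (s : Set (Fin (d + 1))) := hι ▸ Set.mem_range_self y
  obtain ⟨x, -, hx⟩ := Finset.mem_image.1 hy
  exact ⟨x, hinj (by simpa only [hφ', comp_apply] using hx)⟩

end SimplexCategory

lemma isNondegenerateSimplex_iff {K : SSet.{u}} {m : ℕ} (σ : K _⦋m⦌) :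
    IsNondegenerateSimplex K σ ↔ σ ∈ K.nonDegenerate m := by
  rw [SSet.mem_nonDegenerate_iff_notMem_degenerate, SSet.mem_degenerate_iff]
  simp only [IsNondegenerateSimplex, SimplexCategory.epi_iff_surjective, Set.mem_range, not_exists]
  exact ⟨fun h l hl s hs τ hτ => h ⦋l⦌ hl s hs τ hτ.symm,
    fun h e he s hs τ hτ => h e.len he s hs τ hτ.symm⟩

namespace SymPair

variable {K : SSet.{u}} {p : ℕ}

def HasNormalForm (P : SymPair K p) {q : ℕ} (σ₀ : K _⦋q⦌) (h : Fin (p + 1) → Fin (q + 1)) :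
    Prop :=
  σ₀ ∈ K.nonDegenerate q ∧ ∃ (k : ℕ) (μ : ⦋k⦌ ⟶ P.d) (t : ⦋k⦌ ⟶ ⦋q⦌)
    (f₁ : Fin (p + 1) → Fin (k + 1)), Mono μ ∧ Epi t ∧ Surjective f₁ ∧
      μ.toOrderHom ∘ f₁ = P.f ∧ t.toOrderHom ∘ f₁ = h ∧ K.map μ.op P.σ = K.map t.op σ₀

variable {q : ℕ} {σ₀ : K _⦋q⦌} {h : Fin (p + 1) → Fin (q + 1)}

lemma hasNormalForm_self (hσ₀ : σ₀ ∈ K.nonDegenerate q) (hh : Surjective h) :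
    HasNormalForm ⟨⦋q⦌, σ₀, h⟩ σ₀ h :=
  ⟨hσ₀, q, 𝟙 _, 𝟙 _, h, inferInstance, inferInstance, hh, rfl, rfl, rfl⟩

section Invariance

variable {d e : SimplexCategory} {g : d ⟶ e} {σ : K.obj (op e)}
  {f : Fin (p + 1) → Fin (d.len + 1)}

lemma HasNormalForm.of_map (hP : HasNormalForm ⟨d, K.map g.op σ, f⟩ σ₀ h) :
    HasNormalForm ⟨e, σ, g.toOrderHom ∘ f⟩ σ₀ h := by
  obtain ⟨hσ₀, k, μ, t, f₁, _, _, hf₁, hμ, ht, hmap⟩ := hP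
  obtain ⟨c, w, ι, _, _, hfac⟩ : ∃ (c : SimplexCategory) (w : ⦋k⦌ ⟶ c) (ι : c ⟶ e),
      Epi w ∧ Mono ι ∧ w ≫ ι = μ ≫ g :=
    ⟨_, _, _, inferInstance, inferInstance, Limits.image.fac _⟩
  -- `t^*(σ₀)` and `(w ≫ v)^*(ρ)` are two Eilenberg–Zilber decompositions of `μ^*(g^*(σ))`.
  obtain ⟨r, v, _, ρ, hv⟩ := K.exists_nonDegenerate (n := c.len) (K.map ι.op σ)
  have hx : K.map t.op σ₀ = K.map (w ≫ v).op ρ := by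
    rw [← hmap, op_comp, Functor.map_comp_apply, ← hv, ← Functor.map_comp_apply,
      ← op_comp, ← hfac, op_comp, Functor.map_comp_apply]
  obtain rfl := K.unique_nonDegenerate_dim _ t ⟨σ₀, hσ₀⟩ rfl (w ≫ v) ρ hx
  obtain rfl : ρ = ⟨σ₀, hσ₀⟩ := K.unique_nonDegenerate_simplex _ (w ≫ v) ρ hx t _ rfl
  have htv := K.unique_nonDegenerate_map _ t ⟨σ₀, hσ₀⟩ rfl (w ≫ v) _ hx
  refine ⟨hσ₀, _, ι, v, w.toOrderHom ∘ f₁, inferInstance, inferInstance,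
    (SimplexCategory.epi_iff_surjective.1 inferInstance).comp hf₁, ?_, ?_, hv⟩
  · funext x
    rw [show f = μ.toOrderHom ∘ f₁ from hμ.symm]
    exact SimplexCategory.congr_toOrderHom_apply hfac (f₁ x)
  · rw [← ht, htv]
    rfl

lemma HasNormalForm.of_comp (hP : HasNormalForm ⟨e, σ, g.toOrderHom ∘ f⟩ σ₀ h) :
    HasNormalForm ⟨d, K.map g.op σ, f⟩ σ₀ h := by
  obtain ⟨hσ₀, k, μ, t, f₁, _, _, hf₁, hμ, ht, hmap⟩ := hP
  obtain ⟨j, ι, f₂, _, hf₂, hι⟩ := SimplexCategory.exists_mono_comp_surjective f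
  have hgι : ∀ x, (ι ≫ g).toOrderHom (f₂ x) = μ.toOrderHom (f₁ x) := fun x => by
    change g.toOrderHom (ι.toOrderHom (f₂ x)) = _
    rw [← Function.comp_apply (f := ι.toOrderHom), hι]
    exact (congrFun hμ x).symm
  obtain ⟨e₄, he₄⟩ := SimplexCategory.exists_comp_eq_of_range_subset (ι ≫ g) μ <| by
    rintro _ ⟨y, rfl⟩
    obtain ⟨x, rfl⟩ := hf₂ y
    exact ⟨f₁ x, (hgι x).symm⟩
  have he₄f₂ : e₄.toOrderHom ∘ f₂ = f₁ := funext fun x =>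
    SimplexCategory.mono_iff_injective.1 inferInstance <| by
      rw [← hgι, ← he₄]
      rfl
  have : Epi e₄ := SimplexCategory.epi_iff_surjective.2 (Surjective.of_comp (he₄f₂ ▸ hf₁))
  refine ⟨hσ₀, j, ι, e₄ ≫ t, f₂, inferInstance, inferInstance, hf₂, hι, ?_, ?_⟩
  · rw [← ht, ← he₄f₂]
    rfl
  · dsimp only at hmap ⊢
    rw [← Functor.map_comp_apply, ← op_comp, ← he₄, op_comp, Functor.map_comp_apply,
      hmap, ← Functor.map_comp_apply, ← op_comp]

end Invariance

lemma hasNormalForm_iff_of_eqvGen {P Q : SymPair K p} (hPQ : Relation.EqvGen (SymRel K p) P Q) :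
    HasNormalForm P σ₀ h ↔ HasNormalForm Q σ₀ h := by
  induction hPQ with
  | rel _ _ hPQ => obtain ⟨g, σ, f⟩ := hPQ; exact ⟨HasNormalForm.of_comp, HasNormalForm.of_map⟩
  | refl => rfl
  | symm _ _ _ ih => exact ih.symm
  | trans _ _ _ _ _ ih₁ ih₂ => exact ih₁.trans ih₂

lemma HasNormalForm.exists_monotone_eq_map {τ : K _⦋p⦌}
    (hτ : HasNormalForm ⟨⦋p⦌, τ, id⟩ σ₀ h) :
    ∃ hmono : Monotone h, τ = K.map (SimplexCategory.mkHom ⟨h, hmono⟩).op σ₀ := by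
  obtain ⟨-, k, μ, t, f₁, -, -, -, hμ, rfl, hmap⟩ := hτ
  let s : ⦋p⦌ ⟶ ⦋k⦌ := SimplexCategory.mkHom
    ⟨f₁, μ.toOrderHom.monotone.monotone_of_leftInverse (congrFun hμ)⟩
  have hs : s ≫ μ = 𝟙 _ := SimplexCategory.Hom.ext _ _ (OrderHom.ext _ _ hμ)
  refine ⟨(s ≫ t).toOrderHom.monotone, ?_⟩
  calc τ = K.map (s ≫ μ).op τ := by rw [hs, op_id, K.map_id]; rfl
    _ = K.map (s ≫ t).op σ₀ := by
      rw [op_comp, Functor.map_comp_apply, op_comp, Functor.map_comp_apply]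
      exact congrArg _ hmap

end SymPair

/-- if `σ ∈ K_m` is nondegenerate, `f : ⟨n⟩ → ⟨m⟩` is surjective,
`g : ⟨p⟩ → ⟨n⟩` is surjective and `(τ, id) ∼ (σ, f ∘ g)` in `S(K)_p` for some
`τ ∈ K_p`, then `f ∘ g` is weakly increasing and `τ = (f ∘ g)^*(σ)`. -/
theorem stmt8 (K : SSet.{u}) {m : ℕ} (σ : K.obj (op (SimplexCategory.mk m)))
    (hσ : IsNondegenerateSimplex K σ) {n : ℕ} (f : Fin (n + 1) → Fin (m + 1))
    (hf : Function.Surjective f) {p : ℕ} (g : Fin (p + 1) → Fin (n + 1))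
    (hg : Function.Surjective g) (τ : K.obj (op (SimplexCategory.mk p)))
    (hτ : Quot.mk (SymRel K p) ⟨SimplexCategory.mk p, τ, id⟩ =
      Quot.mk _ ⟨SimplexCategory.mk m, σ, f ∘ g⟩) :
    ∃ hmono : Monotone (f ∘ g),
      τ = K.map (SimplexCategory.mkHom ⟨f ∘ g, hmono⟩).op σ := by
  have hself : SymPair.HasNormalForm ⟨⦋m⦌, σ, f ∘ g⟩ σ (f ∘ g) :=
    SymPair.hasNormalForm_self ((isNondegenerateSimplex_iff σ).1 hσ) (hf.comp hg)
  exact ((SymPair.hasNormalForm_iff_of_eqvGen (Quot.eq.1 hτ)).2 hself).exists_monotone_eq_map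
end

section
/- Let X be a topological space, 𝔅 a basis for its topology, U ⊆ X open, and B₀ ∈ 𝔅 with B₀ ⊆ U. Let T be the simplicial set whose n-simplices are the functions O assigning to each nonempty subset A ⊆ {0,…,n} an element O(A) ∈ 𝔅 with B₀ ⊆ O(A) ⊆ U, where a weakly increasing map u : ⟨m⟩ → ⟨n⟩ acts by O ↦ (A ↦ O(u(A))). Then T is a trivial (contractible) Kan complex: T is nonempty and every map ∂Δ^n → T, n ≥ 1, extends to Δ^n. -/
open CategoryTheory Opposite Simplicial

lemma O_congr {γ : Sort*} {k : ℕ}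
    (O : ∀ A : Finset (Fin k), A.Nonempty → γ)
    {A B : Finset (Fin k)} (h : A = B) {hA : A.Nonempty} {hB : B.Nonempty} :
    O A hA = O B hB := by subst h; rfl

/-- The simplicial set `T` whose `n`-simplices are the functions `O` assigning to each
nonempty subset `A ⊆ {0, …, n}` an element `O(A) ∈ 𝔅` with `B₀ ⊆ O(A) ⊆ U`, with a
weakly increasing map `u` acting by `O ↦ (A ↦ O(u(A)))`. -/
def basisSections {X : Type} (𝔅 : Set (Set X)) (B₀ Uo : Set X) : SSet where
  obj a := ∀ A : Finset (Fin (a.unop.len + 1)), A.Nonempty →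
    { B : Set X // B ∈ 𝔅 ∧ B₀ ⊆ B ∧ B ⊆ Uo }
  map {a b} u := TypeCat.ofHom fun O => fun A hA => O (A.image u.unop.toOrderHom) (hA.image _)
  map_id a := by
    ext : 2
    funext O A hA
    exact O_congr O (by simp)
  map_comp {a b c} u v := by
    ext : 2
    funext O A hA
    exact O_congr O (by simp [Finset.image_image])

/-!
An `n`-simplex of `T` labels the nonempty faces of `Δ^n` by admissible basis sets, and
simplicial operators act by relabelling. Naturality makes the label `τ(u)(A)` of a map
`τ : ∂Δ^{n+1} → T` depend only on the face `u(A)` of `Δ^{n+1}`: restrict `u` to the face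
spanned by `A`, then factor it as a surjection followed by the inclusion of `u(A)`. So `τ` is
a labelling of the proper faces of `Δ^{n+1}`, and labelling the top face by `B₀` extends it.
-/

open SSet

namespace SimplexCategory

def faceInclusion {m : ℕ} (A : Finset (Fin (m + 1))) (hA : A.Nonempty) :
    ⦋A.card - 1⦌ ⟶ ⦋m⦌ :=
  Hom.mk (A.orderEmbOfFin (Nat.sub_one_add_one hA.card_pos.ne').symm).toOrderHom

lemma faceInclusion_mem {m : ℕ} (A : Finset (Fin (m + 1))) (hA : A.Nonempty)
    (i : Fin (A.card - 1 + 1)) : (faceInclusion A hA).toOrderHom i ∈ A :=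
  Finset.orderEmbOfFin_mem A (Nat.sub_one_add_one hA.card_pos.ne').symm i

lemma image_univ_faceInclusion {m : ℕ} (A : Finset (Fin (m + 1))) (hA : A.Nonempty) :
    Finset.univ.image (faceInclusion A hA).toOrderHom = A :=
  Finset.image_orderEmbOfFin_univ A (Nat.sub_one_add_one hA.card_pos.ne').symm

lemma exists_surjective_comp_faceInclusion {k m : ℕ} (f : ⦋k⦌ ⟶ ⦋m⦌)
    (A : Finset (Fin (m + 1))) (hA : A.Nonempty) (hf : Finset.univ.image f.toOrderHom = A) :
    ∃ p : ⦋k⦌ ⟶ ⦋A.card - 1⦌,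
      Function.Surjective p.toOrderHom ∧ p ≫ faceInclusion A hA = f := by
  subst hf
  set e := (Finset.univ.image f.toOrderHom).orderIsoOfFin
    (Nat.sub_one_add_one hA.card_pos.ne').symm
  have hmem (i : Fin (k + 1)) : f.toOrderHom i ∈ Finset.univ.image f.toOrderHom :=
    Finset.mem_image_of_mem _ (Finset.mem_univ i)
  refine ⟨Hom.mk ⟨fun i => e.symm ⟨_, hmem i⟩,
    fun i j hij => e.symm.monotone (f.toOrderHom.monotone hij)⟩, fun j => ?_, ?_⟩
  · obtain ⟨i, -, hi⟩ := Finset.mem_image.mp (e j).2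
    exact ⟨i, e.symm_apply_eq.mpr (Subtype.ext hi)⟩
  · ext i : 3
    exact congrArg Subtype.val (e.apply_symm_apply ⟨_, hmem i⟩)

end SimplexCategory

namespace SSet.boundary

lemma image_ne_univ {n k : ℕ} (u : (∂Δ[n] : SSet) _⦋k⦌) (A : Finset (Fin (k + 1))) :
    A.image u.1 ≠ Finset.univ := by
  obtain ⟨j, hj⟩ := (mem_boundary_iff_notMem_range u.1).mp u.2
  intro h
  obtain ⟨i, -, hi⟩ := Finset.mem_image.mp (h ▸ Finset.mem_univ j)
  exact hj ⟨i, hi⟩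

def simplexOfFace {n : ℕ} (B : Finset (Fin (n + 1))) (hB : B.Nonempty)
    (hB' : B ≠ Finset.univ) :
    (∂Δ[n] : SSet) _⦋B.card - 1⦌ :=
  ⟨stdSimplex.objEquiv.symm (SimplexCategory.faceInclusion B hB), by
    obtain ⟨j, hj⟩ := not_forall.mp (mt Finset.eq_univ_of_forall hB')
    exact (mem_boundary_iff_notMem_range _).mpr
      ⟨j, fun ⟨i, hi⟩ => hj (hi ▸ SimplexCategory.faceInclusion_mem B hB i)⟩⟩

end SSet.boundary

section

variable {X : Type} {𝔅 : Set (Set X)} {B₀ Uo : Set X}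

lemma basisSections_app_map {Y : SSet} (τ : Y ⟶ basisSections 𝔅 B₀ Uo) {a b : SimplexCategory}
    (f : a ⟶ b) (y : Y.obj (op b)) (A : Finset (Fin (a.len + 1))) (hA : A.Nonempty) :
    τ.app (op a) (Y.map f.op y) A hA = τ.app (op b) y (A.image f.toOrderHom) (hA.image _) :=
  congrFun (congrFun (ConcreteCategory.congr_hom (τ.naturality f.op) y) A) hA

lemma basisSections_app_boundary {n k : ℕ} (τ : (∂Δ[n] : SSet) ⟶ basisSections 𝔅 B₀ Uo)
    (u : (∂Δ[n] : SSet) _⦋k⦌) (A : Finset (Fin (k + 1))) (hA : A.Nonempty) :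
    τ.app _ u A hA = τ.app _ (boundary.simplexOfFace (A.image u.1) (hA.image _)
      (boundary.image_ne_univ u A)) Finset.univ Finset.univ_nonempty := by
  obtain ⟨p, hp, hpB⟩ := SimplexCategory.exists_surjective_comp_faceInclusion
    (SimplexCategory.faceInclusion A hA ≫ stdSimplex.objEquiv u.1) (A.image u.1) (hA.image _)
    (by
      conv_rhs => rw [← SimplexCategory.image_univ_faceInclusion A hA]
      rw [Finset.image_image]; rfl)
  have hu : (∂Δ[n] : SSet).map (SimplexCategory.faceInclusion A hA).op u =
      (∂Δ[n] : SSet).map p.op (boundary.simplexOfFace (A.image u.1) (hA.image _)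
        (boundary.image_ne_univ u A)) :=
    Subtype.ext (stdSimplex.objEquiv.injective hpB.symm)
  calc τ.app _ u A hA
      = τ.app _ u (Finset.univ.image (SimplexCategory.faceInclusion A hA).toOrderHom)
          (Finset.univ_nonempty.image _) :=
        O_congr _ (SimplexCategory.image_univ_faceInclusion A hA).symm
    _ = τ.app _ ((∂Δ[n] : SSet).map (SimplexCategory.faceInclusion A hA).op u)
          Finset.univ Finset.univ_nonempty :=
        (basisSections_app_map τ _ u _ _).symm
    _ = τ.app _ ((∂Δ[n] : SSet).map p.op (boundary.simplexOfFace (A.image u.1) (hA.image _)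
          (boundary.image_ne_univ u A))) Finset.univ Finset.univ_nonempty := by
        rw [hu]
    _ = _ := (basisSections_app_map τ _ _ _ _).trans
        (O_congr _ (Finset.image_univ_of_surjective hp))

def boundaryExtension {n : ℕ} (τ : (∂Δ[n] : SSet) ⟶ basisSections 𝔅 B₀ Uo)
    (top : { B : Set X // B ∈ 𝔅 ∧ B₀ ⊆ B ∧ B ⊆ Uo }) : (basisSections 𝔅 B₀ Uo) _⦋n⦌ :=
  fun B hB => if h : B = Finset.univ then top
    else τ.app _ (boundary.simplexOfFace B hB h) Finset.univ Finset.univ_nonempty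

lemma boundary_ι_comp_yonedaEquiv_symm_boundaryExtension {n : ℕ}
    (τ : (∂Δ[n] : SSet) ⟶ basisSections 𝔅 B₀ Uo)
    (top : { B : Set X // B ∈ 𝔅 ∧ B₀ ⊆ B ∧ B ⊆ Uo }) :
    (∂Δ[n]).ι ≫ yonedaEquiv.symm (boundaryExtension τ top) = τ := by
  ext ⟨k⟩ : 1
  induction k using SimplexCategory.rec with | _ k
  ext : 2
  funext u A hA
  exact (dif_neg (boundary.image_ne_univ u A)).trans (basisSections_app_boundary τ u A hA).symm

end

theorem stmt11_general {X : Type} (𝔅 : Set (Set X))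
    (Uo : Set X)
    (B₀ : Set X) (hB₀ : B₀ ∈ 𝔅) (hB₀U : B₀ ⊆ Uo) :
    Nonempty ((basisSections 𝔅 B₀ Uo).obj (op (SimplexCategory.mk 0))) ∧
    ∀ (n : ℕ) (τ : (∂Δ[n + 1] : SSet) ⟶ basisSections 𝔅 B₀ Uo),
      ∃ g : Δ[n + 1] ⟶ basisSections 𝔅 B₀ Uo,
        ∂Δ[n + 1].ι ≫ g = τ :=
  let b₀ : { B : Set X // B ∈ 𝔅 ∧ B₀ ⊆ B ∧ B ⊆ Uo } := ⟨B₀, hB₀, subset_rfl, hB₀U⟩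
  ⟨⟨fun _ _ => b₀⟩, fun _ τ =>
    ⟨_, boundary_ι_comp_yonedaEquiv_symm_boundaryExtension τ b₀⟩⟩

/-- if `𝔅` is a basis for the topology of `X`, `U ⊆ X` is open,
`B₀ ∈ 𝔅` and `B₀ ⊆ U`, then the simplicial set `T` is a trivial (contractible) Kan
complex: it is nonempty and every map `∂Δ^n → T` with `n ≥ 1` extends to `Δ^n`. -/
theorem stmt11 {X : Type} [TopologicalSpace X] (𝔅 : Set (Set X))
    (hB : TopologicalSpace.IsTopologicalBasis 𝔅) (Uo : Set X) (hUo : IsOpen Uo)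
    (B₀ : Set X) (hB₀ : B₀ ∈ 𝔅) (hB₀U : B₀ ⊆ Uo) :
    Nonempty ((basisSections 𝔅 B₀ Uo).obj (op (SimplexCategory.mk 0))) ∧
    ∀ (n : ℕ) (τ : (∂Δ[n + 1] : SSet) ⟶ basisSections 𝔅 B₀ Uo),
      ∃ g : Δ[n + 1] ⟶ basisSections 𝔅 B₀ Uo,
        ∂Δ[n + 1].ι ≫ g = τ :=
  stmt11_general 𝔅 Uo B₀ hB₀ hB₀U
end
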